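/- Let A₁, …, A_m be Hermitian n×n matrices and let 1 ≤ r ≤ n. If the map β from {positive semidefinite Hermitian n×n matrices of rank at most r} to ℝ^m given by X ↦ (⟨X, A_j⟩_ℝ)_{j=1}^m is injective, then a₀ := inf { Σ_{j=1}^m ⟨x x* − y y*, A_j⟩_ℝ² / ‖x x* − y y*‖₂² : x, y ∈ ℂ^{n×r}, x x* ≠ y y* } is strictly positive. -/

import Mathlib

open Matrix Filter
open scoped ComplexOrder

noncomputable def frob {p q : ℕ} (x : Matrix (Fin p) (Fin q) ℂ) : ℝ :=
  Real.sqrt (Matrix.trace (xᴴ * x)).re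

noncomputable def rinner {p q : ℕ} (X Y : Matrix (Fin p) (Fin q) ℂ) : ℝ :=
  (Matrix.trace (Xᴴ * Y)).re

noncomputable def nuclear {p q : ℕ} (x : Matrix (Fin p) (Fin q) ℂ) : ℝ :=
  (Matrix.trace (((Matrix.posSemidef_conjTranspose_mul_self x).1.eigenvectorUnitary : Matrix (Fin q) (Fin q) ℂ) *
    diagonal (((↑) : ℝ → ℂ) ∘ Real.sqrt ∘ (Matrix.posSemidef_conjTranspose_mul_self x).1.eigenvalues) *
    star ((Matrix.posSemidef_conjTranspose_mul_self x).1.eigenvectorUnitary : Matrix (Fin q) (Fin q) ℂ))).re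

noncomputable def theta {n r : ℕ} (x : Matrix (Fin n) (Fin r) ℂ) : Matrix (Fin n) (Fin n) ℂ :=
  ((Matrix.posSemidef_self_mul_conjTranspose x).1.eigenvectorUnitary : Matrix (Fin n) (Fin n) ℂ) *
    diagonal (((↑) : ℝ → ℂ) ∘ Real.sqrt ∘ (Matrix.posSemidef_self_mul_conjTranspose x).1.eigenvalues) *
    star ((Matrix.posSemidef_self_mul_conjTranspose x).1.eigenvectorUnitary : Matrix (Fin n) (Fin n) ℂ)

noncomputable def psi {n r : ℕ} (x : Matrix (Fin n) (Fin r) ℂ) : Matrix (Fin n) (Fin n) ℂ :=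
  frob x • theta x

noncomputable def Dmet {n r : ℕ} (x y : Matrix (Fin n) (Fin r) ℂ) : ℝ :=
  ⨅ U : Matrix.unitaryGroup (Fin r) ℂ, frob (x - y * (U : Matrix (Fin r) (Fin r) ℂ))

noncomputable def dmet {n r : ℕ} (x y : Matrix (Fin n) (Fin r) ℂ) : ℝ :=
  ⨅ U : Matrix.unitaryGroup (Fin r) ℂ,
    frob (x - y * (U : Matrix (Fin r) (Fin r) ℂ)) * frob (x + y * (U : Matrix (Fin r) (Fin r) ℂ))

/-!
Since the quotient is invariant under `(x, y) ↦ (c x, c y)`, `a₀` is the infimum of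
`∑ j, ⟨Δ, A_j⟩²` over the unit-norm matrices `Δ = x xᴴ - y yᴴ`; by injectivity this function is
positive at every such `Δ`, so it suffices that the unit-norm slice of the cone `{x xᴴ - y yᴴ}` is
compact. For this, split `Δ` spectrally as `Δ₊ - Δ₋`: since `Δ ≤ x xᴴ` and `-Δ ≤ y yᴴ`, the parts
have rank at most `r`, hence factor as `x' x'ᴴ` and `y' y'ᴴ` with `‖x'‖², ‖y'‖² ≤ n ‖Δ‖`. So the
slice is the intersection of the unit sphere with a continuous image of a compact set.
-/

open Matrix Unitary

attribute [local instance] Matrix.frobeniusNormedAddCommGroup Matrix.frobeniusNormedSpace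

namespace Matrix

section Frobenius

variable {m n : Type*} [Fintype m] [Fintype n] {𝕜 : Type*} [RCLike 𝕜]

lemma frobenius_norm_sq_eq_re_trace (A : Matrix m n 𝕜) :
    ‖A‖ ^ 2 = RCLike.re (Aᴴ * A).trace := by
  rw [frobenius_norm_def, ← Real.rpow_natCast, ← Real.rpow_mul (by positivity)]
  norm_num
  rw [trace, map_sum, Finset.sum_comm]
  simp [mul_apply, RCLike.conj_mul]

end Frobenius

variable {n k : Type*} [Fintype n] [Fintype k] {𝕜 : Type*} [RCLike 𝕜]

lemma card_le_rank_of_posDef_conjTranspose_mul_mul {K : Matrix n n 𝕜} (W : Matrix n k 𝕜)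
    (h : (Wᴴ * K * W).PosDef) : Fintype.card k ≤ K.rank := by
  classical
  calc Fintype.card k = (Wᴴ * K * W).rank := (rank_of_isUnit _ h.isUnit).symm
    _ ≤ (Wᴴ * K).rank := rank_mul_le_left _ _
    _ ≤ K.rank := rank_mul_le_right _ _

variable [DecidableEq n]

lemma rank_conjStarAlgAut (U : unitaryGroup n 𝕜) (M : Matrix n n 𝕜) :
    (conjStarAlgAut 𝕜 _ U M).rank = M.rank := by
  rw [conjStarAlgAut_apply, ← coe_star]
  simp [-isUnit_iff_ne_zero, -coe_star]

lemma trace_conjStarAlgAut (U : unitaryGroup n 𝕜) (M : Matrix n n 𝕜) :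
    (conjStarAlgAut 𝕜 _ U M).trace = M.trace := by
  rw [conjStarAlgAut_apply, trace_mul_cycle, coe_star_mul_self, Matrix.one_mul]

lemma PosSemidef.conjStarAlgAut {M : Matrix n n 𝕜} (hM : M.PosSemidef) (U : unitaryGroup n 𝕜) :
    (conjStarAlgAut 𝕜 _ U M).PosSemidef := by
  simpa [star_eq_conjTranspose] using hM.mul_mul_conjTranspose_same (U : Matrix n n 𝕜)

lemma IsHermitian.trace_mul_self {A : Matrix n n 𝕜} (hA : A.IsHermitian) :
    (A * A).trace = ∑ i, ((hA.eigenvalues i ^ 2 : ℝ) : 𝕜) := by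
  conv_lhs => rw [hA.spectral_theorem]
  rw [← map_mul, trace_conjStarAlgAut, diagonal_mul_diagonal, trace_diagonal]
  simp [sq]

lemma IsHermitian.abs_eigenvalues_le_norm {A : Matrix n n 𝕜} (hA : A.IsHermitian) (i : n) :
    |hA.eigenvalues i| ≤ ‖A‖ := by
  rw [← sq_le_sq₀ (abs_nonneg _) (norm_nonneg A), sq_abs, frobenius_norm_sq_eq_re_trace,
    hA.eq, hA.trace_mul_self, map_sum]
  simp only [RCLike.ofReal_re]
  exact Finset.single_le_sum (fun j _ => sq_nonneg (hA.eigenvalues j)) (Finset.mem_univ i)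

lemma card_pos_le_rank_of_posSemidef_sub {K : Matrix n n 𝕜} (U : unitaryGroup n 𝕜) {d : n → ℝ}
    (hK : (K - conjStarAlgAut 𝕜 _ U (diagonal (RCLike.ofReal ∘ d))).PosSemidef) :
    Fintype.card {i // 0 < d i} ≤ K.rank := by
  -- The columns of `W` are the eigenvectors of positive eigenvalue, on which `H ≤ K` is positive.
  set W : Matrix n {i // 0 < d i} 𝕜 :=
    (U : Matrix n n 𝕜) * (1 : Matrix n n 𝕜).submatrix id Subtype.val
  apply card_le_rank_of_posDef_conjTranspose_mul_mul W
  have hdiag : Wᴴ * conjStarAlgAut 𝕜 _ U (diagonal (RCLike.ofReal ∘ d)) * W =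
      diagonal fun i : {i // 0 < d i} => (d i : 𝕜) := by
    have hUU : star (U : Matrix n n 𝕜) * U = 1 := coe_star_mul_self U
    simp only [W, conjStarAlgAut_apply, conjTranspose_mul, ← star_eq_conjTranspose,
      ← Matrix.mul_assoc, Matrix.mul_assoc _ (star (U : Matrix n n 𝕜)) (U : Matrix n n 𝕜), hUU,
      Matrix.mul_one]
    ext i j
    rcases eq_or_ne i j with rfl | hij
    · simp [mul_apply, one_apply]
    · simp [mul_apply, one_apply, hij, Subtype.val_injective.ne hij]
  have hpos : (Wᴴ * conjStarAlgAut 𝕜 _ U (diagonal (RCLike.ofReal ∘ d)) * W).PosDef := by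
    rw [hdiag]
    exact posDef_diagonal_iff.mpr fun i => by exact_mod_cast i.2
  simpa [Matrix.mul_sub, Matrix.sub_mul] using
    PosDef.posSemidef_add (hK.conjTranspose_mul_mul_same W) hpos

lemma PosSemidef.exists_eq_mul_conjTranspose_of_rank_le {P : Matrix n n 𝕜} (hP : P.PosSemidef)
    (hrank : P.rank ≤ Fintype.card k) : ∃ x : Matrix n k 𝕜, P = x * xᴴ := by
  classical
  set ev := hP.1.eigenvalues
  set U : Matrix n n 𝕜 := (hP.1.eigenvectorUnitary : Matrix n n 𝕜)
  obtain ⟨e⟩ : Nonempty ({i // ev i ≠ 0} ↪ k) :=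
    Function.Embedding.nonempty_of_card_le (hP.1.rank_eq_card_non_zero_eigs ▸ hrank)
  -- `C = U √D` has `C Cᴴ = P`, and its columns with zero eigenvalue vanish; the remaining ones
  -- are moved into the columns `k` along `e`.
  set C : Matrix n n 𝕜 := U * diagonal fun i => ((√(ev i) : ℝ) : 𝕜)
  have hC : C * Cᴴ = P := by
    conv_rhs => rw [hP.1.spectral_theorem, conjStarAlgAut_apply]
    simp only [C, conjTranspose_mul, diagonal_conjTranspose, Matrix.mul_assoc,
      ← Matrix.mul_assoc (diagonal _), diagonal_mul_diagonal, star_eq_conjTranspose, U]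
    congr 3
    ext i
    simp [← RCLike.ofReal_mul, Real.mul_self_sqrt (hP.eigenvalues_nonneg i), ev]
  set Cs : Matrix n {i // ev i ≠ 0} 𝕜 := C.submatrix id Subtype.val
  set E : Matrix {i // ev i ≠ 0} k 𝕜 := (1 : Matrix k k 𝕜).submatrix e id
  have hCs : (Cs * Csᴴ : Matrix n n 𝕜) = C * Cᴴ := by
    ext i j
    simp only [Cs, mul_apply, submatrix_apply, id, conjTranspose_apply]
    refine (Finset.sum_subtype _ (fun _ => Finset.mem_filter_univ _)
      (fun l => C i l * star (C j l))).symm.trans (Finset.sum_filter_of_ne fun l _ hl => ?_)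
    contrapose! hl
    simp [C, mul_apply, diagonal_apply, hl]
  have hE : (E * Eᴴ : Matrix _ _ 𝕜) = 1 := by
    rw [conjTranspose_submatrix, conjTranspose_one, ← submatrix_mul _ _ _ _ _ Function.bijective_id,
      Matrix.one_mul, submatrix_one_embedding]
  refine ⟨Cs * E, ?_⟩
  rw [conjTranspose_mul, Matrix.mul_assoc, ← Matrix.mul_assoc E, hE,
    Matrix.one_mul, hCs, hC]

lemma exists_mul_conjTranspose_eq_posPart (U : unitaryGroup n 𝕜) (d : n → ℝ) (z : Matrix n k 𝕜)
    (hz : (z * zᴴ - conjStarAlgAut 𝕜 _ U (diagonal (RCLike.ofReal ∘ d))).PosSemidef) :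
    ∃ z' : Matrix n k 𝕜,
      z' * z'ᴴ = conjStarAlgAut 𝕜 _ U (diagonal (RCLike.ofReal ∘ fun i => max (d i) 0)) ∧
      ‖z'‖ ^ 2 = ∑ i, max (d i) 0 := by
  classical
  set P := conjStarAlgAut 𝕜 _ U (diagonal (RCLike.ofReal ∘ fun i => max (d i) 0))
  have hP : P.PosSemidef :=
    (posSemidef_diagonal_iff.mpr fun i => by simp).conjStarAlgAut U
  have hrank : P.rank ≤ Fintype.card k := calc
    P.rank = Fintype.card {i // 0 < d i} := by
      rw [rank_conjStarAlgAut, rank_diagonal]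
      exact Fintype.card_congr (Equiv.subtypeEquivRight fun i => by simp)
    _ ≤ (z * zᴴ).rank := card_pos_le_rank_of_posSemidef_sub U hz
    _ ≤ Fintype.card k := (rank_self_mul_conjTranspose z).trans_le (rank_le_card_width z)
  obtain ⟨z', hz'⟩ := hP.exists_eq_mul_conjTranspose_of_rank_le hrank
  refine ⟨z', hz'.symm, ?_⟩
  rw [frobenius_norm_sq_eq_re_trace, trace_mul_comm, ← hz', trace_conjStarAlgAut, trace_diagonal,
    map_sum]
  simp

lemma exists_mul_conjTranspose_sub_eq_of_norm_sq_le (x y : Matrix n k 𝕜) :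
    ∃ x' y' : Matrix n k 𝕜, x' * x'ᴴ - y' * y'ᴴ = x * xᴴ - y * yᴴ ∧
      ‖x'‖ ^ 2 ≤ Fintype.card n * ‖x * xᴴ - y * yᴴ‖ ∧
      ‖y'‖ ^ 2 ≤ Fintype.card n * ‖x * xᴴ - y * yᴴ‖ := by
  set Δ := x * xᴴ - y * yᴴ
  have hΔ : Δ.IsHermitian :=
    (posSemidef_self_mul_conjTranspose x).isHermitian.sub
      (posSemidef_self_mul_conjTranspose y).isHermitian
  set U := hΔ.eigenvectorUnitary
  set ev := hΔ.eigenvalues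
  have hspec : Δ = conjStarAlgAut 𝕜 _ U (diagonal (RCLike.ofReal ∘ ev)) := hΔ.spectral_theorem
  have hneg : -Δ = conjStarAlgAut 𝕜 _ U (diagonal (RCLike.ofReal ∘ (-ev))) := by
    rw [hspec, ← map_neg, diagonal_neg]
    congr 2
    ext i
    simp
  obtain ⟨x', hx', hnx'⟩ := exists_mul_conjTranspose_eq_posPart U ev x
    (by rw [← hspec, sub_sub_cancel]; exact posSemidef_self_mul_conjTranspose y)
  obtain ⟨y', hy', hny'⟩ := exists_mul_conjTranspose_eq_posPart U (-ev) y
    (by rw [← hneg, sub_neg_eq_add, add_sub_cancel]; exact posSemidef_self_mul_conjTranspose x)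
  have hsum : ∀ d : n → ℝ, (∀ i, |d i| ≤ ‖Δ‖) → ∑ i, max (d i) 0 ≤ Fintype.card n * ‖Δ‖ :=
    fun d hd => calc
      ∑ i, max (d i) 0 ≤ ∑ _i : n, ‖Δ‖ :=
        Finset.sum_le_sum fun i _ => max_le ((le_abs_self _).trans (hd i)) (norm_nonneg Δ)
      _ = Fintype.card n * ‖Δ‖ := by rw [Finset.sum_const, Finset.card_univ, nsmul_eq_mul]
  refine ⟨x', y', ?_, hnx' ▸ hsum ev hΔ.abs_eigenvalues_le_norm,
    hny' ▸ hsum (-ev) (by simpa using hΔ.abs_eigenvalues_le_norm)⟩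
  rw [hx', hy', ← map_sub, diagonal_sub, hspec]
  congr 2
  ext i
  simp [← RCLike.ofReal_sub, max_zero_sub_max_neg_zero_eq_self]

end Matrix

section Rinner

variable {p q : ℕ}

lemma frob_eq_norm (x : Matrix (Fin p) (Fin q) ℂ) : frob x = ‖x‖ := by
  rw [frob, ← RCLike.re_to_complex, ← frobenius_norm_sq_eq_re_trace, Real.sqrt_sq (norm_nonneg x)]

lemma rinner_sub_left (X Y Z : Matrix (Fin p) (Fin q) ℂ) :
    rinner (X - Y) Z = rinner X Z - rinner Y Z := by
  simp [rinner, Matrix.sub_mul]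

lemma rinner_smul_left (c : ℝ) (X Y : Matrix (Fin p) (Fin q) ℂ) :
    rinner (c • X) Y = c * rinner X Y := by
  simp [rinner, Matrix.smul_mul, ← Complex.coe_smul]

lemma continuous_rinner_left (Y : Matrix (Fin p) (Fin q) ℂ) :
    Continuous fun X : Matrix (Fin p) (Fin q) ℂ => rinner X Y :=
  Complex.continuous_re.comp
    (continuous_id.matrix_conjTranspose.matrix_mul continuous_const).matrix_trace

end Rinner

lemma exists_pos_mul_norm_sq_le {E : Type*} [NormedAddCommGroup E] [NormedSpace ℝ E] {C : Set E}
    {f : E → ℝ} (hC : ∀ v ∈ C, ∀ c : ℝ, 0 ≤ c → c • v ∈ C)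
    (hCS : IsCompact (C ∩ Metric.sphere 0 1)) (hf : Continuous f)
    (hf_smul : ∀ (c : ℝ) (v : E), f (c • v) = c ^ 2 * f v) (hpos : ∀ v ∈ C, v ≠ 0 → 0 < f v) :
    ∃ a > 0, ∀ v ∈ C, a * ‖v‖ ^ 2 ≤ f v := by
  obtain ⟨a, ha, hle⟩ := hCS.exists_forall_le' hf.continuousOn fun u hu =>
    hpos u hu.1 (ne_zero_of_mem_unit_sphere ⟨u, hu.2⟩)
  refine ⟨a, ha, fun v hv => ?_⟩
  rcases eq_or_ne v 0 with rfl | hv0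
  · simpa using (hf_smul 0 0).ge
  · have hnorm : 0 < ‖v‖ := norm_pos_iff.mpr hv0
    have h := hle (‖v‖⁻¹ • v) ⟨hC v hv _ (inv_nonneg.mpr hnorm.le), by simp [norm_smul, hnorm.ne']⟩
    rw [hf_smul, inv_pow, inv_mul_eq_div, le_div_iff₀ (by positivity)] at h
    exact h

def gramDiffs (𝕜 n k : Type*) [RCLike 𝕜] [Fintype k] : Set (Matrix n n 𝕜) :=
  {Δ | ∃ x y : Matrix n k 𝕜, Δ = x * xᴴ - y * yᴴ}

section GramDiffs

variable {𝕜 n k : Type*} [RCLike 𝕜] [Fintype k]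

lemma smul_mem_gramDiffs {Δ : Matrix n n 𝕜} (hΔ : Δ ∈ gramDiffs 𝕜 n k) {c : ℝ} (hc : 0 ≤ c) :
    c • Δ ∈ gramDiffs 𝕜 n k := by
  obtain ⟨x, y, rfl⟩ := hΔ
  have hsq : ∀ z : Matrix n k 𝕜, ((√c : 𝕜) • z) * ((√c : 𝕜) • z)ᴴ = c • (z * zᴴ) := fun z => by
    rw [conjTranspose_smul, Matrix.smul_mul, Matrix.mul_smul, smul_smul, RCLike.star_def,
      RCLike.conj_ofReal, ← RCLike.ofReal_mul, Real.mul_self_sqrt hc,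
      RCLike.real_smul_eq_coe_smul (K := 𝕜)]
  exact ⟨(√c : 𝕜) • x, (√c : 𝕜) • y, by rw [hsq, hsq, smul_sub]⟩

lemma isCompact_gramDiffs_inter_sphere [Fintype n] :
    IsCompact (gramDiffs 𝕜 n k ∩ Metric.sphere 0 1) := by
  classical
  set g : Matrix n k 𝕜 × Matrix n k 𝕜 → Matrix n n 𝕜 := fun p => p.1 * p.1ᴴ - p.2 * p.2ᴴ
  set B := Metric.closedBall (0 : Matrix n k 𝕜) √(Fintype.card n)
  have hg : Continuous g :=
    (continuous_fst.matrix_mul continuous_fst.matrix_conjTranspose).sub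
      (continuous_snd.matrix_mul continuous_snd.matrix_conjTranspose)
  suffices gramDiffs 𝕜 n k ∩ Metric.sphere 0 1 = g '' (B ×ˢ B) ∩ Metric.sphere 0 1 by
    rw [this]
    exact ((isCompact_closedBall _ _).prod (isCompact_closedBall _ _)).image hg
      |>.inter_right Metric.isClosed_sphere
  refine Set.Subset.antisymm ?_ fun Δ ⟨⟨p, _, hp⟩, hΔ⟩ => ⟨⟨p.1, p.2, hp.symm⟩, hΔ⟩
  rintro _ ⟨⟨x, y, rfl⟩, hΔ⟩
  obtain ⟨x', y', heq, hx', hy'⟩ := exists_mul_conjTranspose_sub_eq_of_norm_sq_le x y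
  rw [mem_sphere_zero_iff_norm.mp hΔ, mul_one] at hx' hy'
  exact ⟨⟨(x', y'), ⟨mem_closedBall_zero_iff.mpr (Real.le_sqrt_of_sq_le hx'),
    mem_closedBall_zero_iff.mpr (Real.le_sqrt_of_sq_le hy')⟩, heq⟩, hΔ⟩

end GramDiffs

lemma sum_rinner_sq_pos_of_injective {n r m : ℕ} {A : Fin m → Matrix (Fin n) (Fin n) ℂ}
    (hinj : ∀ X Y : Matrix (Fin n) (Fin n) ℂ, X.PosSemidef → Y.PosSemidef →
      X.rank ≤ r → Y.rank ≤ r → (∀ j, rinner X (A j) = rinner Y (A j)) → X = Y)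
    {Δ : Matrix (Fin n) (Fin n) ℂ} (hΔ : Δ ∈ gramDiffs ℂ (Fin n) (Fin r)) (hΔ0 : Δ ≠ 0) :
    0 < ∑ j, rinner Δ (A j) ^ 2 := by
  obtain ⟨x, y, rfl⟩ := hΔ
  refine (Finset.sum_nonneg fun j _ => sq_nonneg _).lt_of_ne fun hsum => hΔ0 (sub_eq_zero.mpr ?_)
  have hzero := (Finset.sum_eq_zero_iff_of_nonneg fun j _ => sq_nonneg _).mp hsum.symm
  refine hinj _ _ (posSemidef_self_mul_conjTranspose x) (posSemidef_self_mul_conjTranspose y)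
    ((rank_self_mul_conjTranspose x).trans_le (rank_le_width x))
    ((rank_self_mul_conjTranspose y).trans_le (rank_le_width y)) fun j => ?_
  rw [← sub_eq_zero, ← rinner_sub_left]
  exact pow_eq_zero_iff two_ne_zero |>.mp (hzero j (Finset.mem_univ j))

theorem a0_pos_of_injective_general (n r m : ℕ) (hr : 1 ≤ r) (hnr : r ≤ n)
    (A : Fin m → Matrix (Fin n) (Fin n) ℂ)
    (hinj : ∀ X Y : Matrix (Fin n) (Fin n) ℂ, X.PosSemidef → Y.PosSemidef →
      X.rank ≤ r → Y.rank ≤ r →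
      (∀ j, rinner X (A j) = rinner Y (A j)) → X = Y) :
    0 < sInf {t : ℝ | ∃ x y : Matrix (Fin n) (Fin r) ℂ, x * xᴴ ≠ y * yᴴ ∧
      t = (∑ j, rinner (x * xᴴ - y * yᴴ) (A j) ^ 2) / frob (x * xᴴ - y * yᴴ) ^ 2} := by
  obtain ⟨a, ha, hle⟩ := exists_pos_mul_norm_sq_le (C := gramDiffs ℂ (Fin n) (Fin r))
    (f := fun Δ => ∑ j, rinner Δ (A j) ^ 2) (fun _ hΔ _ hc => smul_mem_gramDiffs hΔ hc)
    isCompact_gramDiffs_inter_sphere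
    (continuous_finsetSum _ fun j _ => (continuous_rinner_left (A j)).pow 2)
    (fun c Δ => by simp only [rinner_smul_left, mul_pow, Finset.mul_sum])
    (fun Δ hΔ hΔ0 => sum_rinner_sq_pos_of_injective hinj hΔ hΔ0)
  have hJ : (of fun _ _ => 1 : Matrix (Fin n) (Fin r) ℂ) ≠ 0 := fun h =>
    one_ne_zero (congrFun (congrFun h ⟨0, by omega⟩) ⟨0, hr⟩)
  refine ha.trans_le
    (le_csInf ⟨_, _, 0, by simpa [self_mul_conjTranspose_eq_zero] using hJ, rfl⟩ ?_)
  rintro t ⟨x, y, hxy, rfl⟩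
  have hpos : 0 < ‖x * xᴴ - y * yᴴ‖ := norm_pos_iff.mpr (sub_ne_zero.mpr hxy)
  rw [frob_eq_norm, le_div_iff₀ (by positivity)]
  exact hle _ ⟨x, y, rfl⟩

/-- if the map `X ↦ (⟨X, A_j⟩_ℝ)_j` is injective on positive semidefinite
Hermitian matrices of rank at most `r`, then the squared global lower Lipschitz constant
`a₀` of the analysis map `β` is strictly positive. -/
theorem a0_pos_of_injective (n r m : ℕ) (hr : 1 ≤ r) (hnr : r ≤ n)
    (A : Fin m → Matrix (Fin n) (Fin n) ℂ) (hA : ∀ j, (A j).IsHermitian)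
    (hinj : ∀ X Y : Matrix (Fin n) (Fin n) ℂ, X.PosSemidef → Y.PosSemidef →
      X.rank ≤ r → Y.rank ≤ r →
      (∀ j, rinner X (A j) = rinner Y (A j)) → X = Y) :
    0 < sInf {t : ℝ | ∃ x y : Matrix (Fin n) (Fin r) ℂ, x * xᴴ ≠ y * yᴴ ∧
      t = (∑ j, rinner (x * xᴴ - y * yᴴ) (A j) ^ 2) / frob (x * xᴴ - y * yᴴ) ^ 2} :=
  a0_pos_of_injective_general n r m hr hnr A hinj
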